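/- Let n, k be integers with n > 2k and k ≥ 1, and let i be an integer with 0 ≤ i < k. Then the automorphism group Aut(G_i(n,k)) is isomorphic to the centralizer Z_{S_n}(σ_i) of σ_i in the symmetric group S_n. -/

import Mathlib

/-- The involution on `ℕ` swapping `2j ↔ 2j+1` for `j < i`. -/
def sigmaNat (i : ℕ) (x : ℕ) : ℕ :=
  if x < 2 * i then (if x % 2 = 0 then x + 1 else x - 1) else x

lemma sigmaNat_invol (i : ℕ) : Function.Involutive (sigmaNat i) := by
  intro x; unfold sigmaNat; split_ifs <;> omega

/-- `sigmaNat` restricted to `Fin n` (the identity in the out-of-range degenerate case,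
which never occurs when `2 * i ≤ n`). -/
def sigmaFinFun (n i : ℕ) (x : Fin n) : Fin n :=
  if h : sigmaNat i x.val < n then ⟨sigmaNat i x.val, h⟩ else x

lemma sigmaFinFun_invol (n i : ℕ) : Function.Involutive (sigmaFinFun n i) := by
  intro x
  unfold sigmaFinFun
  by_cases h : sigmaNat i x.val < n
  · rw [dif_pos h]
    have h2 : sigmaNat i ((⟨sigmaNat i x.val, h⟩ : Fin n) : ℕ) < n := by
      show sigmaNat i (sigmaNat i x.val) < n
      rw [sigmaNat_invol]; exact x.isLt
    rw [dif_pos h2]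
    ext
    exact sigmaNat_invol i x.val
  · rw [dif_neg h, dif_neg h]

/-- The permutation `σ_i = (1 2)(3 4)⋯(2i-1 2i)` of `[n]`, in `0`-indexed form on `Fin n`:
it swaps `2j ↔ 2j+1` for `j < i` and fixes everything else (assuming `2 * i ≤ n`). -/
def sigmaPerm (n i : ℕ) : Equiv.Perm (Fin n) :=
  Function.Involutive.toPerm _ (sigmaFinFun_invol n i)

/-- The graph `G_i(n,k)`: vertices are the `k`-subsets of `[n]`, with `v` adjacent to `w`
iff `v ∩ σ_i(w) = ∅`. -/
def GGraph (n k i : ℕ) : SimpleGraph {s : Finset (Fin n) // s.card = k} where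
  Adj v w := v ≠ w ∧ Disjoint v.1 (w.1.image (sigmaPerm n i))
  symm := by
    constructor
    rintro v w ⟨h1, h2⟩
    refine ⟨h1.symm, ?_⟩
    rw [Finset.disjoint_left] at h2 ⊢
    intro a haw hav
    rcases Finset.mem_image.mp hav with ⟨b, hbv, hba⟩
    refine h2 hbv (Finset.mem_image.mpr ⟨a, haw, ?_⟩)
    rw [← hba]
    exact (sigmaFinFun_invol n i) b
  loopless := ⟨fun _ h => h.1 rfl⟩

/-- The automorphism group of a simple graph, as the subgroup of the permutation group of
its vertices consisting of adjacency-preserving permutations. -/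
def graphAut {V : Type*} (G : SimpleGraph V) : Subgroup (Equiv.Perm V) where
  carrier := {π | ∀ a b, G.Adj (π a) (π b) ↔ G.Adj a b}
  one_mem' := fun _ _ => Iff.rfl
  mul_mem' := by
    intro π ρ hπ hρ a b
    simpa [Equiv.Perm.mul_apply] using (hπ (ρ a) (ρ b)).trans (hρ a b)
  inv_mem' := by
    intro π hπ a b
    have := (hπ (π⁻¹ a) (π⁻¹ b)).symm
    simpa using this

/-!
An automorphism `f` of `G_i(n,k)` preserves the relation `R v w :↔ v ∩ σ_i(w) = ∅` also on the
diagonal: every `R`-neighbourhood has `C(n-k,k)` elements and `f` preserves degrees. Hence `f`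
preserves the number `C(n - |v ∪ w|, k)` of common `R`-neighbours of `v` and `w`, which for
`n > 2k` equals `C(n-k-1,k)` exactly when `|v ∪ w| = k+1`; so `f` is an automorphism of the
Johnson graph `J(n,k)`. For `n > 2k` every automorphism of `J(n,k)` is induced by a permutation
of `[n]`: it maps each clique `{v | T ⊆ v}`, `|T| = k-1`, to a clique of the same kind, giving an
automorphism of `J(n,k-1)`, and one inducts on `k`. Finally, if `f` is induced by `π`, then
`π σ_i(w)` and `σ_i π(w)` are disjoint from the same `k`-sets, hence equal, so `π σ_i = σ_i π`.
-/

open Finset Equiv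

lemma Nat.choose_lt_choose_succ {m k : ℕ} (hk : 0 < k) (h : k ≤ m + 1) :
    m.choose k < (m + 1).choose k := by
  obtain ⟨j, rfl⟩ : ∃ j, k = j + 1 := ⟨k - 1, by omega⟩
  rw [Nat.choose_succ_succ']
  have := Nat.choose_pos (show j ≤ m by omega)
  omega

lemma Nat.choose_sub_eq_choose_sub_succ_iff {n k s : ℕ} (hk : 0 < k) (hn : 2 * k < n)
    (hs : k ≤ s) : (n - s).choose k = (n - (k + 1)).choose k ↔ s = k + 1 := by
  refine ⟨fun h => ?_, fun h => h ▸ rfl⟩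
  by_contra hne
  rcases (Nat.lt_or_gt_of_ne hne) with hlt | hgt
  · rw [show n - s = n - (k + 1) + 1 by omega] at h
    exact (Nat.choose_lt_choose_succ hk (by omega)).ne' h
  · have h₁ := Nat.choose_le_choose k (show n - s ≤ n - (k + 2) by omega)
    have h₂ := Nat.choose_lt_choose_succ hk (show k ≤ n - (k + 2) + 1 by omega)
    rw [show n - (k + 2) + 1 = n - (k + 1) by omega] at h₂
    omega

section Subsets

def permSubsets (α : Type*) [DecidableEq α] (k : ℕ) : Perm α →* Perm {s : Finset α // #s = k} where
  toFun π :=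
    { toFun v := ⟨v.1.image π, by rw [card_image_of_injective _ π.injective, v.2]⟩
      invFun v := ⟨v.1.image π.symm, by rw [card_image_of_injective _ π.symm.injective, v.2]⟩
      left_inv v := by ext; simp
      right_inv v := by ext; simp }
  map_one' := by ext; simp
  map_mul' π ρ := by ext; simp [image_image]

variable {α : Type*} {k : ℕ}

lemma eq_of_val_subset {v w : {s : Finset α // #s = k}} (h : v.1 ⊆ w.1) : v = w :=
  Subtype.ext (eq_of_subset_of_card_le h (by rw [v.2, w.2]))

variable [DecidableEq α]

@[simp]
lemma coe_permSubsets_apply (π : Perm α) (v : {s : Finset α // #s = k}) :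
    (permSubsets α k π v : Finset α) = v.1.image π := rfl

variable [Fintype α]

lemma permSubsets_injective (hk : 0 < k) (hkα : k < Fintype.card α) :
    Function.Injective (permSubsets α k) := by
  refine (injective_iff_map_eq_one _).mpr fun π hπ => ?_
  by_contra hne
  obtain ⟨a, ha⟩ : ∃ a, π a ≠ a := by simpa [Perm.ext_iff] using hne
  obtain ⟨s, has, hsπa, hs⟩ := exists_subsuperset_card_eq (n := k)
    (singleton_subset_iff.mpr (mem_compl.mpr (mem_singleton.not.mpr ha.symm)) :
      {a} ⊆ ({π a}ᶜ : Finset α))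
    (by rw [card_singleton]; exact hk) (by rw [card_compl, card_singleton]; omega)
  have h := congrArg Subtype.val (Perm.ext_iff.mp hπ ⟨s, hs⟩)
  simp only [coe_permSubsets_apply, Perm.coe_one, id_eq] at h
  have : π a ∈ s := h ▸ mem_image_of_mem π (singleton_subset_iff.mp has)
  exact mem_compl.mp (hsπa this) (mem_singleton_self _)

lemma card_filter_disjoint (A : Finset α) :
    #{v : {s : Finset α // #s = k} | Disjoint v.1 A} = (Fintype.card α - #A).choose k := by
  rw [← card_compl, ← card_powersetCard, ← card_map (Function.Embedding.subtype _)]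
  congr 1
  ext s
  simp [mem_powersetCard, subset_compl_iff_disjoint_right, and_comm]

lemma subset_of_forall_disjoint_imp {A B : Finset α} (hk : 0 < k)
    (hB : #B + k ≤ Fintype.card α)
    (h : ∀ v : {s : Finset α // #s = k}, Disjoint v.1 B → Disjoint v.1 A) : A ⊆ B := by
  intro a ha
  by_contra haB
  obtain ⟨u, hau, huB, hu⟩ := exists_subsuperset_card_eq (n := k)
    (singleton_subset_iff.mpr (mem_compl.mpr haB) : {a} ⊆ Bᶜ)
    (by rw [card_singleton]; exact hk) (by rw [card_compl]; omega)
  exact disjoint_left.mp (h ⟨u, hu⟩ (subset_compl_iff_disjoint_right.mp huB))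
    (singleton_subset_iff.mp hau) ha

lemma subset_of_forall_subset_imp {S T : Finset α} (hT : #T ≤ k) (hk : k < Fintype.card α)
    (h : ∀ v : {s : Finset α // #s = k}, T ⊆ v.1 → S ⊆ v.1) : S ⊆ T := by
  intro x hxS
  by_contra hxT
  obtain ⟨u, hTu, hux, hu⟩ := exists_subsuperset_card_eq (n := k)
    (subset_compl_singleton.mpr hxT) hT (by rw [card_compl, card_singleton]; omega)
  exact (mem_compl.mp (hux (h ⟨u, hu⟩ hTu hxS))) (mem_singleton_self x)

end Subsets

section Johnson

variable {α : Type*} [DecidableEq α] {m : ℕ}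

def johnsonGraph (α : Type*) [DecidableEq α] (k : ℕ) : SimpleGraph {s : Finset α // #s = k} where
  Adj v w := #(v.1 ∪ w.1) = k + 1
  symm := ⟨fun v w h => by rwa [union_comm]⟩
  loopless := ⟨fun v h => by simp [v.2] at h⟩

lemma johnsonGraph_adj {k : ℕ} {v w : {s : Finset α // #s = k}} :
    (johnsonGraph α k).Adj v w ↔ #(v.1 ∪ w.1) = k + 1 := Iff.rfl

lemma eq_of_card_union_le {k : ℕ} {s t : Finset α} (hs : #s = k) (ht : #t = k)
    (h : #(s ∪ t) ≤ k) : s = t := by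
  have hts : t ⊆ s :=
    union_eq_left.mp (eq_of_subset_of_card_le subset_union_left (by omega)).symm
  exact (eq_of_subset_of_card_le hts (by omega)).symm

lemma subset_union_of_not_inter_subset {X Y Z : Finset α} (hX : #X = m + 1) (hY : #Y = m + 1)
    (hZ : #Z = m + 1) (hXY : #(X ∪ Y) = m + 2) (hXZ : #(Z ∪ X) = m + 2)
    (hYZ : #(Z ∪ Y) = m + 2) (h : ¬ X ∩ Y ⊆ Z) : Z ⊆ X ∪ Y := by
  obtain ⟨x, hxXY, hxZ⟩ := not_subset.mp h
  have hXY' := card_union_add_card_inter X Y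
  have hXZ' := card_union_add_card_inter Z X
  have hYZ' := card_union_add_card_inter Z Y
  -- `Z` meets `X` and `Y` in `m` points each but `X ∩ Y` in at most `m - 1`, so it meets
  -- `X ∪ Y` in `m + 1` points.
  have hcore : #(Z ∩ X ∩ (Z ∩ Y)) ≤ #((X ∩ Y).erase x) :=
    card_le_card fun z hz => by
      simp only [mem_inter, mem_erase] at hz ⊢
      exact ⟨fun hzx => hxZ (hzx ▸ hz.1.1), hz.1.2, hz.2.2⟩
  have hxXY' := card_erase_add_one hxXY
  have hunion := card_union_add_card_inter (Z ∩ X) (Z ∩ Y)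
  have hZ' : Z ∩ X ∪ Z ∩ Y = Z := by
    refine eq_of_subset_of_card_le (union_subset inter_subset_left inter_subset_left) ?_
    omega
  rw [← inter_union_distrib_left] at hZ'
  exact inter_eq_left.mp hZ'

lemma exists_subset_of_isClique {𝒞 : Finset {s : Finset α // #s = m + 1}}
    (h𝒞 : (johnsonGraph α (m + 1)).IsClique (𝒞 : Set {s : Finset α // #s = m + 1}))
    (hcard : m + 3 ≤ #𝒞) : ∃ T : Finset α, #T = m ∧ ∀ v ∈ 𝒞, T ⊆ v.1 := by
  obtain ⟨X, hX, Y, hY, hXY⟩ := one_lt_card.mp (by omega : 1 < #𝒞)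
  have adj : ∀ {A B}, A ∈ 𝒞 → B ∈ 𝒞 → A ≠ B → #(A.1 ∪ B.1) = m + 2 :=
    fun hA hB hAB => johnsonGraph_adj.mp (h𝒞 hA hB hAB)
  have hXY' := card_union_add_card_inter X.1 Y.1
  rw [adj hX hY hXY, X.2, Y.2] at hXY'
  refine ⟨X.1 ∩ Y.1, by omega, ?_⟩
  by_contra! ⟨Z, hZ, hXYZ⟩
  have hZX : Z ≠ X := by rintro rfl; exact hXYZ inter_subset_left
  have hZY : Z ≠ Y := by rintro rfl; exact hXYZ inter_subset_right
  have hZsub : Z.1 ⊆ X.1 ∪ Y.1 := subset_union_of_not_inter_subset X.2 Y.2 Z.2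
    (adj hX hY hXY) (adj hZ hX hZX) (adj hZ hY hZY) hXYZ
  -- A member `W ⊄ X ∪ Y` would contain `X ∩ Z` and `Y ∩ Z`, whose union is `Z ⊆ X ∪ Y`.
  have hall : ∀ W ∈ 𝒞, W.1 ⊆ X.1 ∪ Y.1 := by
    intro W hW
    by_contra hWsub
    have hWX : W ≠ X := by rintro rfl; exact hWsub subset_union_left
    have hWY : W ≠ Y := by rintro rfl; exact hWsub subset_union_right
    have hWZ : W ≠ Z := by rintro rfl; exact hWsub hZsub
    have hXZW : X.1 ∩ Z.1 ⊆ W.1 := by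
      by_contra h
      exact hWsub ((subset_union_of_not_inter_subset X.2 Z.2 W.2 (adj hX hZ hZX.symm)
        (adj hW hX hWX) (adj hW hZ hWZ) h).trans (union_subset_union_right hZsub)
        |>.trans (by rw [← union_assoc, union_self]))
    have hYZW : Y.1 ∩ Z.1 ⊆ W.1 := by
      by_contra h
      exact hWsub ((subset_union_of_not_inter_subset Y.2 Z.2 W.2 (adj hY hZ hZY.symm)
        (adj hW hY hWY) (adj hW hZ hWZ) h).trans (union_subset_union_right hZsub)
        |>.trans (by rw [union_comm X.1, ← union_assoc, union_self]))
    have hZW : Z.1 ⊆ W.1 := fun z hz => (mem_union.mp (hZsub hz)).elim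
      (fun hzX => hXZW (mem_inter.mpr ⟨hzX, hz⟩)) (fun hzY => hYZW (mem_inter.mpr ⟨hzY, hz⟩))
    exact hWZ (eq_of_val_subset hZW).symm
  have hle : #𝒞 ≤ #((X.1 ∪ Y.1).powersetCard (m + 1)) := by
    rw [← card_map (Function.Embedding.subtype _)]
    exact card_le_card fun s hs => by
      obtain ⟨W, hW, rfl⟩ := mem_map.mp hs
      exact mem_powersetCard.mpr ⟨hall W hW, W.2⟩
  rw [card_powersetCard, adj hX hY hXY, Nat.choose_succ_self_right] at hle
  omega

end Johnson

section Rigidity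

variable {α : Type*} [DecidableEq α] {m : ℕ}

lemma johnsonGraph_adj_iff_exists_superset {T₁ T₂ : {s : Finset α // #s = m}} :
    (johnsonGraph α m).Adj T₁ T₂ ↔
      T₁ ≠ T₂ ∧ ∃ v : {s : Finset α // #s = m + 1}, T₁.1 ⊆ v.1 ∧ T₂.1 ⊆ v.1 := by
  refine ⟨fun h => ⟨(johnsonGraph α m).ne_of_adj h, ⟨_, h⟩, subset_union_left,
    subset_union_right⟩, fun ⟨hne, v, h₁, h₂⟩ => ?_⟩
  have hle := v.2 ▸ card_le_card (union_subset h₁ h₂)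
  have hge := T₁.2 ▸ card_le_card (subset_union_left : T₁.1 ⊆ T₁.1 ∪ T₂.1)
  have hne' : ¬ #(T₁.1 ∪ T₂.1) ≤ m := fun h => hne (Subtype.ext (eq_of_card_union_le T₁.2 T₂.2 h))
  exact johnsonGraph_adj.mpr (by omega)

lemma permSubsets_one_surjective : Function.Surjective (permSubsets α 1) := by
  intro F
  let e : α ≃ {s : Finset α // #s = 1} := Equiv.ofBijective (fun a => ⟨{a}, card_singleton a⟩)
    ⟨fun a b h => singleton_injective (congrArg Subtype.val h),
      fun v => (card_eq_one.mp v.2).imp fun a ha => Subtype.ext ha.symm⟩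
  refine ⟨(e.trans F).trans e.symm, Equiv.ext fun v => ?_⟩
  obtain ⟨a, rfl⟩ := e.surjective v
  apply Subtype.ext
  rw [coe_permSubsets_apply]
  conv_rhs => rw [← e.apply_symm_apply (F (e a))]
  exact image_singleton _ _

variable [Fintype α]

lemma isClique_filter_superset {T : Finset α} (hT : #T = m) :
    (johnsonGraph α (m + 1)).IsClique
      (({v | T ⊆ v.1} : Finset {s : Finset α // #s = m + 1}) : Set _) := by
  intro v hv w hw hvw
  simp only [coe_filter, mem_univ, true_and, Set.mem_ofPred_eq] at hv hw
  have hinter := hT ▸ card_le_card (subset_inter hv hw)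
  have hunion := card_union_add_card_inter v.1 w.1
  have hne : ¬ #(v.1 ∪ w.1) ≤ m + 1 := fun h => hvw (Subtype.ext (eq_of_card_union_le v.2 w.2 h))
  rw [v.2, w.2] at hunion
  exact johnsonGraph_adj.mpr (by omega)

lemma le_card_filter_superset {T : Finset α} (hT : #T = m) :
    Fintype.card α - m ≤ #({v | T ⊆ v.1} : Finset {s : Finset α // #s = m + 1}) := by
  let g : {x // x ∈ Tᶜ} → {s : Finset α // #s = m + 1} := fun x =>
    ⟨insert x.1 T, by rw [card_insert_of_notMem (mem_compl.mp x.2), hT]⟩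
  have hg : Function.Injective g := fun x y h => by
    have hx : x.1 ∈ insert y.1 T := by
      rw [← show insert x.1 T = insert y.1 T from congrArg Subtype.val h]
      exact mem_insert_self _ _
    exact Subtype.ext ((mem_insert.mp hx).resolve_right (mem_compl.mp x.2))
  calc Fintype.card α - m = #(Tᶜ.attach) := by rw [card_attach, card_compl, hT]
    _ ≤ _ := card_le_card_of_injOn g (fun x _ => by simp [g, subset_insert]) hg.injOn

lemma exists_forall_subset_imp (hα : 2 * (m + 1) < Fintype.card α)
    {F : Perm {s : Finset α // #s = m + 1}} (hF : F ∈ graphAut (johnsonGraph α (m + 1)))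
    {T : Finset α} (hT : #T = m) :
    ∃ T' : Finset α, #T' = m ∧ ∀ v, T ⊆ v.1 → T' ⊆ (F v).1 := by
  set 𝒞 := ({v | T ⊆ v.1} : Finset {s : Finset α // #s = m + 1}).image F
  have h𝒞 : (johnsonGraph α (m + 1)).IsClique (𝒞 : Set {s : Finset α // #s = m + 1}) := by
    rw [coe_image]
    rintro _ ⟨v, hv, rfl⟩ _ ⟨w, hw, rfl⟩ hvw
    exact (hF v w).mpr (isClique_filter_superset hT hv hw (fun h => hvw (h ▸ rfl)))
  have hcard : m + 3 ≤ #𝒞 := by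
    rw [card_image_of_injective _ F.injective]
    have := le_card_filter_superset hT
    omega
  obtain ⟨T', hT', h⟩ := exists_subset_of_isClique h𝒞 hcard
  exact ⟨T', hT', fun v hv => h (F v) (mem_image_of_mem F (by simpa using hv))⟩

lemma exists_forall_subset_iff (hα : 2 * (m + 1) < Fintype.card α)
    {F : Perm {s : Finset α // #s = m + 1}} (hF : F ∈ graphAut (johnsonGraph α (m + 1)))
    {T : Finset α} (hT : #T = m) :
    ∃ T' : Finset α, #T' = m ∧ ∀ v, T ⊆ v.1 ↔ T' ⊆ (F v).1 := by
  obtain ⟨T', hT', h₁⟩ := exists_forall_subset_imp hα hF hT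
  obtain ⟨T'', hT'', h₂⟩ := exists_forall_subset_imp hα (inv_mem hF) hT'
  have hsub : T'' ⊆ T := subset_of_forall_subset_imp (k := m + 1) (by omega) (by omega)
    fun v hv => by simpa using h₂ (F v) (h₁ v hv)
  obtain rfl : T'' = T := eq_of_subset_of_card_le hsub (by omega)
  exact ⟨T', hT', fun v => ⟨h₁ v, fun hv => by simpa using h₂ (F v) hv⟩⟩

lemma exists_mem_graphAut_forall_subset_iff (hα : 2 * (m + 1) < Fintype.card α)
    {F : Perm {s : Finset α // #s = m + 1}} (hF : F ∈ graphAut (johnsonGraph α (m + 1))) :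
    ∃ F' ∈ graphAut (johnsonGraph α m), ∀ T v, T.1 ⊆ v.1 ↔ (F' T).1 ⊆ (F v).1 := by
  choose g hg using fun T : {s : Finset α // #s = m} => exists_forall_subset_iff hα hF T.2
  let g' (T : {s : Finset α // #s = m}) : {s : Finset α // #s = m} := ⟨g T, (hg T).1⟩
  have hspec : ∀ T v, T.1 ⊆ v.1 ↔ (g' T).1 ⊆ (F v).1 := fun T => (hg T).2
  have hinj : Function.Injective g' := fun T₁ T₂ h => eq_of_val_subset <|
    subset_of_forall_subset_imp (k := m + 1) (by omega) (by omega)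
      fun v hv => by rwa [hspec, h, ← hspec]
  refine ⟨Equiv.ofBijective g' (Finite.injective_iff_bijective.mp hinj), fun T₁ T₂ => ?_, hspec⟩
  simp only [johnsonGraph_adj_iff_exists_superset, Equiv.ofBijective_apply, hinj.ne_iff]
  rw [F.surjective.exists]
  simp only [← hspec]

theorem exists_permSubsets_eq_of_mem_graphAut_johnsonGraph {k : ℕ} (hk : 0 < k)
    (hα : 2 * k < Fintype.card α) {F : Perm {s : Finset α // #s = k}}
    (hF : F ∈ graphAut (johnsonGraph α k)) : ∃ π, permSubsets α k π = F := by
  induction k, hk using Nat.le_induction with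
  | base => exact permSubsets_one_surjective F
  | succ m hm ih =>
    obtain ⟨F', hF', hspec⟩ := exists_mem_graphAut_forall_subset_iff hα hF
    obtain ⟨π, rfl⟩ := ih (by omega) hF'
    refine ⟨π, Equiv.ext fun v => eq_of_val_subset fun y hy => ?_⟩
    obtain ⟨x, hxv, rfl⟩ := mem_image.mp hy
    obtain ⟨T, hxT, hTv, hT⟩ := exists_subsuperset_card_eq (n := m)
      (singleton_subset_iff.mpr hxv) (by rw [card_singleton]; exact hm) (by rw [v.2]; omega)
    exact (hspec ⟨T, hT⟩ v).mp hTv (mem_image_of_mem π (singleton_subset_iff.mp hxT))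

end Rigidity

lemma rel_iff_of_mem_graphAut {V : Type*} [Fintype V] [DecidableEq V] {G : SimpleGraph V}
    {R : V → V → Prop} [DecidableRel R] (hG : ∀ v w, G.Adj v w ↔ v ≠ w ∧ R v w) {d : ℕ}
    (hd : 0 < d) (hR : ∀ v, #{u | R v u} = d) {f : Perm V} (hf : f ∈ graphAut G) (v w : V) :
    R (f v) (f w) ↔ R v w := by
  classical
  by_cases hvw : v = w
  · subst hvw
    have hadj : ∀ v, ({u | G.Adj v u} : Finset V) = ({u | R v u} : Finset V).erase v := by
      intro v; ext u; simp [hG, ne_comm]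
    -- `f` preserves degrees, and the degree of `v` is `d` minus one exactly when `R v v`.
    have hdeg : #({u | G.Adj v u} : Finset V) = #({u | G.Adj (f v) u} : Finset V) :=
      card_equiv f fun u => by simpa using (hf v u).symm
    simp only [hadj, card_erase_eq_ite, hR, mem_filter, mem_univ, true_and] at hdeg
    by_cases h₁ : R v v <;> by_cases h₂ : R (f v) (f v) <;> simp [h₁, h₂] at hdeg ⊢ <;> omega
  · have := hf v w
    simp only [hG, f.injective.ne_iff] at this
    exact and_congr_right_iff.mp this hvw

section GGraph

variable {n k i : ℕ}

lemma sigmaPerm_involutive : Function.Involutive (sigmaPerm n i) := sigmaFinFun_invol n i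

lemma disjoint_image_sigmaPerm_comm {s t : Finset (Fin n)} :
    Disjoint s (t.image (sigmaPerm n i)) ↔ Disjoint t (s.image (sigmaPerm n i)) := by
  rw [← disjoint_image (sigmaPerm n i).injective, image_image,
    sigmaPerm_involutive.comp_self, image_id, disjoint_comm]

lemma disjoint_image_sigmaPerm_iff_of_mem_graphAut (hn : 2 * k < n)
    {f : Perm {s : Finset (Fin n) // #s = k}} (hf : f ∈ graphAut (GGraph n k i)) (v w) :
    Disjoint (f v).1 ((f w).1.image (sigmaPerm n i)) ↔ Disjoint v.1 (w.1.image (sigmaPerm n i)) :=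
  rel_iff_of_mem_graphAut (fun _ _ => Iff.rfl) (Nat.choose_pos (by omega : k ≤ n - k))
    (fun v => by
      simp_rw [disjoint_image_sigmaPerm_comm (s := v.1)]
      rw [card_filter_disjoint, card_image_of_injective _ (sigmaPerm n i).injective, v.2,
        Fintype.card_fin])
    hf v w

lemma card_filter_disjoint_image_sigmaPerm_and (v w : {s : Finset (Fin n) // #s = k}) :
    #{u : {s : Finset (Fin n) // #s = k} |
      Disjoint v.1 (u.1.image (sigmaPerm n i)) ∧ Disjoint w.1 (u.1.image (sigmaPerm n i))} =
      (n - #(v.1 ∪ w.1)).choose k := by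
  simp_rw [disjoint_image_sigmaPerm_comm (s := v.1), disjoint_image_sigmaPerm_comm (s := w.1),
    ← disjoint_union_right, ← image_union]
  rw [card_filter_disjoint, card_image_of_injective _ (sigmaPerm n i).injective,
    Fintype.card_fin]

lemma graphAut_GGraph_le_graphAut_johnsonGraph (hn : 2 * k < n) (hk : 0 < k) :
    graphAut (GGraph n k i) ≤ graphAut (johnsonGraph (Fin n) k) := by
  intro f hf v w
  have h : (n - #(v.1 ∪ w.1)).choose k = (n - #((f v).1 ∪ (f w).1)).choose k := by
    rw [← card_filter_disjoint_image_sigmaPerm_and (i := i),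
      ← card_filter_disjoint_image_sigmaPerm_and (i := i)]
    exact card_equiv f fun u => by
      simp [disjoint_image_sigmaPerm_iff_of_mem_graphAut hn hf]
  have hcard : ∀ v w : {s : Finset (Fin n) // #s = k}, k ≤ #(v.1 ∪ w.1) :=
    fun v w => v.2.symm.le.trans (card_le_card subset_union_left)
  rw [johnsonGraph_adj, johnsonGraph_adj,
    ← Nat.choose_sub_eq_choose_sub_succ_iff hk hn (hcard _ _),
    ← Nat.choose_sub_eq_choose_sub_succ_iff hk hn (hcard _ _), h]

lemma permSubsets_mem_graphAut_GGraph_of_commute {π : Perm (Fin n)}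
    (hπ : Commute π (sigmaPerm n i)) :
    permSubsets (Fin n) k π ∈ graphAut (GGraph n k i) := by
  intro v w
  show (_ ∧ Disjoint _ (permSubsets (Fin n) k (sigmaPerm n i) (permSubsets (Fin n) k π w)).1) ↔
    (_ ∧ Disjoint _ (permSubsets (Fin n) k (sigmaPerm n i) w).1)
  rw [← Perm.mul_apply, ← map_mul, ← hπ.eq, map_mul, Perm.mul_apply, (Equiv.injective _).ne_iff,
    coe_permSubsets_apply, coe_permSubsets_apply _ (permSubsets _ _ _ w),
    disjoint_image π.injective]

lemma commute_sigmaPerm_of_permSubsets_mem_graphAut (hn : 2 * k < n) (hk : 0 < k)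
    {π : Perm (Fin n)} (hπ : permSubsets (Fin n) k π ∈ graphAut (GGraph n k i)) :
    Commute π (sigmaPerm n i) := by
  set P := permSubsets (Fin n) k
  refine permSubsets_injective hk (by rw [Fintype.card_fin]; omega) (Equiv.ext fun w => (eq_of_val_subset
    (subset_of_forall_disjoint_imp hk ?_ fun u hu => ?_)).symm)
  · rw [(P _ w).2, Fintype.card_fin]
    omega
  obtain ⟨v, rfl⟩ := (P π).surjective u
  rw [map_mul, Perm.mul_apply] at hu ⊢
  exact (disjoint_image_sigmaPerm_iff_of_mem_graphAut hn hπ v w).mpr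
    ((disjoint_image π.injective).mp hu)

theorem graphAut_GGraph_eq_map_centralizer (hn : 2 * k < n) (hk : 0 < k) :
    graphAut (GGraph n k i) =
      (Subgroup.centralizer {sigmaPerm n i}).map (permSubsets (Fin n) k) := by
  ext f
  constructor
  · intro hf
    obtain ⟨π, rfl⟩ := exists_permSubsets_eq_of_mem_graphAut_johnsonGraph hk (by simpa using hn)
      (graphAut_GGraph_le_graphAut_johnsonGraph hn hk hf)
    exact ⟨π, Subgroup.mem_centralizer_singleton_iff.mpr
      (commute_sigmaPerm_of_permSubsets_mem_graphAut hn hk hf), rfl⟩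
  · rintro ⟨π, hπ, rfl⟩
    exact permSubsets_mem_graphAut_GGraph_of_commute
      ((Subgroup.mem_centralizer_singleton_iff (g := sigmaPerm n i)).mp hπ)

end GGraph

theorem aut_GGraph_iso_centralizer_general (n k i : ℕ) (hn : 2 * k < n) (hk : 1 ≤ k) :
    Nonempty ((graphAut (GGraph n k i)) ≃*
      (Subgroup.centralizer ({sigmaPerm n i} : Set (Equiv.Perm (Fin n))))) := by
  rw [graphAut_GGraph_eq_map_centralizer hn hk]
  exact ⟨(Subgroup.equivMapOfInjective _ _ (permSubsets_injective hk (by rw [Fintype.card_fin]; omega))).symm⟩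

/-- for `n > 2k`, `k ≥ 1`, `0 ≤ i < k`, the automorphism group of
`G_i(n,k)` is isomorphic to the centralizer of `σ_i` in `S_n`. -/
theorem aut_GGraph_iso_centralizer (n k i : ℕ) (hn : 2 * k < n) (hk : 1 ≤ k)
    (hi : i < k) :
    Nonempty ((graphAut (GGraph n k i)) ≃*
      (Subgroup.centralizer ({sigmaPerm n i} : Set (Equiv.Perm (Fin n))))) :=
  aut_GGraph_iso_centralizer_general n k i hn hk
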